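/- (Lemma 2.3, expectation form) Let n ≥ 2, let B ∈ ℝ^{n×n}, and let EST^m be the generalized stochastic diagonal estimator built from m i.i.d. standard Gaussian query vectors. If 8·e·log(n) ≤ m ≤ n, then E[ ‖EST^m − diag(B)‖₂² ] ≤ (64·n·(e·log(n))³ / m) · ‖B‖_∞², where ‖B‖_∞ := max_{1≤i≤n} ‖[B]_{i,:}‖₁ is the maximum row ℓ¹ norm of B. -/

import Mathlib

/-!
Coordinate `i` of `EST^m` is the sample mean of `m` independent copies of `Y_i = ω_i (Bω)_i`,
whose mean is `B_ii` because `E[ω_i ω_j] = δ_ij`. Hence `E‖EST^m − diag B‖₂² = Σ_i Var(Y_i) / m`.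
Weighted Cauchy–Schwarz followed by AM–GM gives
`Y_i² ≤ ‖[B]_{i,:}‖₁ · Σ_j |B_ij| (ω_i⁴ + ω_j⁴) / 2`, and `E ω⁴ = 3`, so `Var(Y_i) ≤ 3 ‖B‖_∞²`.
The resulting bound `3 n ‖B‖_∞² / m` is below the claimed one since `e log n ≥ 1` for `n ≥ 2`.
-/

open MeasureTheory ProbabilityTheory Real Polynomial Finset Matrix

section SampleMean

variable {Ω ι : Type*} [MeasurableSpace Ω] [Fintype ι] {μ : Measure Ω} [IsProbabilityMeasure μ]
  {f : Ω → ℝ}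

noncomputable def sampleMean (f : Ω → ℝ) (x : ι → Ω) : ℝ :=
  (1 / Fintype.card ι : ℝ) * ∑ k, f (x k)

lemma memLp_two_sampleMean (hf : MemLp f 2 μ) :
    MemLp (sampleMean (ι := ι) f) 2 (Measure.pi fun _ => μ) := by
  have h := memLp_finsetSum' univ fun k _ =>
    hf.comp_measurePreserving (measurePreserving_eval (fun _ : ι => μ) k)
  convert h.const_mul (1 / Fintype.card ι : ℝ) using 1
  funext x
  simp [sampleMean]

lemma integral_sampleMean [Nonempty ι] (hf : Integrable f μ) :
    ∫ x, sampleMean (ι := ι) f x ∂(Measure.pi fun _ => μ) = ∫ ω, f ω ∂μ := by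
  simp only [sampleMean, integral_const_mul]
  rw [integral_finsetSum _ fun k _ => integrable_comp_eval hf]
  simp [integral_comp_eval (μ := fun _ : ι => μ) hf.aestronglyMeasurable]

lemma variance_sampleMean (hf : MemLp f 2 μ) :
    Var[sampleMean (ι := ι) f; Measure.pi fun _ => μ] = Var[f; μ] / Fintype.card ι := by
  have h := variance_sum_pi (μ := fun _ : ι => μ) (X := fun _ => f) fun _ => hf
  have hsum : sampleMean (ι := ι) f
      = fun x => (1 / Fintype.card ι : ℝ) * (∑ k, fun x : ι → Ω => f (x k)) x := by
    funext x
    simp [sampleMean]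
  rw [hsum, variance_const_mul, h, sum_const, card_univ, nsmul_eq_mul]
  rcases eq_or_ne (Fintype.card ι : ℝ) 0 with h0 | h0
  · simp [h0]
  · field_simp

lemma integrable_sq_sampleMean_sub (hf : MemLp f 2 μ) (c : ℝ) :
    Integrable (fun x => (sampleMean (ι := ι) f x - c) ^ 2) (Measure.pi fun _ => μ) :=
  ((memLp_two_sampleMean hf).sub (memLp_const c)).integrable_sq

lemma integral_sq_sampleMean_sub [Nonempty ι] (hf : MemLp f 2 μ) :
    ∫ x, (sampleMean f x - ∫ ω, f ω ∂μ) ^ 2 ∂(Measure.pi fun _ : ι => μ)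
      = Var[f; μ] / Fintype.card ι := by
  rw [← integral_sampleMean (ι := ι) (hf.integrable one_le_two), ← variance_sampleMean hf,
    variance_eq_integral (memLp_two_sampleMean hf).aestronglyMeasurable.aemeasurable]

end SampleMean

/-- `dⁿ/dtⁿ exp (t²/2) = pₙ(t) exp (t²/2)`; as `exp (t²/2)` is the moment generating function
of `N(0,1)`, its `n`-th moment is `pₙ(0)`. -/
noncomputable def gaussMomentPoly : ℕ → ℝ[X]
  | 0 => 1
  | n + 1 => derivative (gaussMomentPoly n) + X * gaussMomentPoly n

lemma hasDerivAt_exp_half_sq (t : ℝ) :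
    HasDerivAt (fun t => rexp (t ^ 2 / 2)) (t * rexp (t ^ 2 / 2)) t := by
  convert ((hasDerivAt_pow 2 t).div_const 2).exp using 1
  push_cast
  ring

lemma iteratedDeriv_exp_half_sq (n : ℕ) :
    iteratedDeriv n (fun t => rexp (t ^ 2 / 2))
      = fun t => (gaussMomentPoly n).eval t * rexp (t ^ 2 / 2) := by
  induction n with
  | zero => simp [gaussMomentPoly]
  | succ n ih =>
    rw [iteratedDeriv_succ, ih]
    funext t
    convert ((gaussMomentPoly n).hasDerivAt t).fun_mul (hasDerivAt_exp_half_sq t) |>.deriv using 1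
    simp only [gaussMomentPoly, eval_add, eval_mul, eval_X]
    ring

lemma integral_pow_gaussianReal (n : ℕ) :
    ∫ x, x ^ n ∂gaussianReal 0 1 = (gaussMomentPoly n).eval 0 := by
  have h := iteratedDeriv_mgf_zero (X := fun x : ℝ => x) (μ := gaussianReal 0 1) (by simp) n
  rw [mgf_fun_id_gaussianReal] at h
  simp only [zero_mul, zero_add, NNReal.coe_one, one_mul, iteratedDeriv_exp_half_sq] at h
  simpa using h.symm

lemma integral_sq_gaussianReal : ∫ x, x ^ 2 ∂gaussianReal 0 1 = 1 := by
  simp [integral_pow_gaussianReal, gaussMomentPoly]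

lemma integral_pow_four_gaussianReal : ∫ x, x ^ 4 ∂gaussianReal 0 1 = 3 := by
  simp [integral_pow_gaussianReal, gaussMomentPoly]
  norm_num

lemma integrable_pow_gaussianReal (n : ℕ) :
    Integrable (fun x : ℝ => x ^ n) (gaussianReal 0 1) :=
  (memLp_id_gaussianReal n).integrable_norm_pow'.mono' (by fun_prop)
    (ae_of_all _ fun x => (norm_pow x n).le)

lemma sq_mul_mulVec_le {ι : Type*} [Fintype ι] (B : Matrix ι ι ℝ) (i : ι) (y : ι → ℝ) :
    (y i * (B *ᵥ y) i) ^ 2 ≤ (∑ j, |B i j|) * ∑ j, |B i j| * ((y i ^ 4 + y j ^ 4) / 2) := by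
  have hcs : ((B *ᵥ y) i) ^ 2 ≤ (∑ j, |B i j|) * ∑ j, |B i j| * y j ^ 2 :=
    sum_sq_le_sum_mul_sum_of_sq_le_mul univ (fun j _ => abs_nonneg _)
      (fun j _ => by positivity) fun j _ => le_of_eq (by rw [mul_pow, ← sq_abs (B i j)]; ring)
  calc (y i * (B *ᵥ y) i) ^ 2 ≤ y i ^ 2 * ((∑ j, |B i j|) * ∑ j, |B i j| * y j ^ 2) := by
        rw [mul_pow]; gcongr
    _ = (∑ j, |B i j|) * ∑ j, |B i j| * (y i ^ 2 * y j ^ 2) := by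
        rw [mul_left_comm, mul_sum]
        congr 1
        exact sum_congr rfl fun j _ => by ring
    _ ≤ _ := by
        gcongr with j
        nlinarith [sq_nonneg (y i ^ 2 - y j ^ 2)]

section GaussianPi

variable {ι : Type*} [Fintype ι]

local notation "γ" => Measure.pi fun _ : ι => gaussianReal 0 1

lemma integral_eval_mul_eval_gaussianPi [DecidableEq ι] (i j : ι) :
    ∫ y, y i * y j ∂γ = if i = j then 1 else 0 := by
  split_ifs with hij
  · subst hij
    simpa [← sq] using (integral_comp_eval (μ := fun _ : ι => gaussianReal 0 1) (i := i)
      (f := fun x : ℝ => x ^ 2) (by fun_prop)).trans integral_sq_gaussianReal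
  · have hind := (iIndepFun_pi (μ := fun _ : ι => gaussianReal 0 1) (X := fun _ x => x)
      fun _ => aemeasurable_id).indepFun hij
    rw [hind.integral_fun_mul_eq_mul_integral (measurable_pi_apply i).aestronglyMeasurable
      (measurable_pi_apply j).aestronglyMeasurable]
    simp [integral_eval]

lemma integrable_eval_mul_eval_gaussianPi (i j : ι) : Integrable (fun y => y i * y j) γ :=
  have h (k : ι) : MemLp (fun y : ι → ℝ => y k) 2 γ :=
    (memLp_id_gaussianReal 2).comp_measurePreserving (measurePreserving_eval _ k)
  (h i).integrable_mul (h j)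

lemma integrable_eval_pow_four_gaussianPi (i : ι) : Integrable (fun y => y i ^ 4) γ :=
  integrable_comp_eval (i := i) (f := fun x => x ^ 4) (integrable_pow_gaussianReal 4)

lemma integral_eval_pow_four_gaussianPi (i : ι) : ∫ y, y i ^ 4 ∂γ = 3 :=
  (integral_comp_eval (μ := fun _ : ι => gaussianReal 0 1) (i := i) (f := fun x : ℝ => x ^ 4)
    (by fun_prop)).trans integral_pow_four_gaussianReal

lemma integrable_pow_four_add_gaussianPi (j k : ι) :
    Integrable (fun y : ι → ℝ => (y j ^ 4 + y k ^ 4) / 2) γ :=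
  ((integrable_eval_pow_four_gaussianPi j).add (integrable_eval_pow_four_gaussianPi k)).div_const 2

lemma integral_pow_four_add_gaussianPi (j k : ι) : ∫ y, (y j ^ 4 + y k ^ 4) / 2 ∂γ = 3 := by
  rw [integral_div, integral_add (integrable_eval_pow_four_gaussianPi j)
    (integrable_eval_pow_four_gaussianPi k), integral_eval_pow_four_gaussianPi,
    integral_eval_pow_four_gaussianPi]
  norm_num

lemma integrable_sq_mul_mulVec_bound (B : Matrix ι ι ℝ) (i : ι) :
    Integrable (fun y : ι → ℝ => (∑ j, |B i j|) * ∑ j, |B i j| * ((y i ^ 4 + y j ^ 4) / 2)) γ :=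
  (integrable_finsetSum _ fun j _ =>
    (integrable_pow_four_add_gaussianPi i j).const_mul _).const_mul _

lemma memLp_two_mul_mulVec_gaussianPi (B : Matrix ι ι ℝ) (i : ι) :
    MemLp (fun y => y i * (B *ᵥ y) i) 2 γ := by
  have hmeas : Measurable fun y : ι → ℝ => y i * (B *ᵥ y) i := by
    simp only [Matrix.mulVec, dotProduct]; fun_prop
  refine (memLp_two_iff_integrable_sq hmeas.aestronglyMeasurable).2 ?_
  refine (integrable_sq_mul_mulVec_bound B i).mono' (by fun_prop) (ae_of_all _ fun y => ?_)
  rw [Real.norm_of_nonneg (sq_nonneg _)]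
  exact sq_mul_mulVec_le B i y

lemma integral_mul_mulVec_gaussianPi (B : Matrix ι ι ℝ) (i : ι) :
    ∫ y, y i * (B *ᵥ y) i ∂γ = B i i := by
  classical
  have hsum : (fun y : ι → ℝ => y i * (B *ᵥ y) i) = fun y => ∑ j, B i j * (y i * y j) := by
    funext y
    simp only [Matrix.mulVec, dotProduct, mul_sum]
    exact sum_congr rfl fun j _ => by ring
  rw [hsum, integral_finsetSum _ fun j _ => (integrable_eval_mul_eval_gaussianPi i j).const_mul _]
  simp [integral_const_mul, integral_eval_mul_eval_gaussianPi]

lemma variance_mul_mulVec_gaussianPi_le (B : Matrix ι ι ℝ) (i : ι) :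
    Var[fun y => y i * (B *ᵥ y) i; γ] ≤ 3 * (∑ j, |B i j|) ^ 2 := by
  refine (variance_le_expectation_sq
    (memLp_two_mul_mulVec_gaussianPi B i).aestronglyMeasurable).trans ?_
  calc ∫ y, (y i * (B *ᵥ y) i) ^ 2 ∂γ
      ≤ ∫ y, (∑ j, |B i j|) * ∑ j, |B i j| * ((y i ^ 4 + y j ^ 4) / 2) ∂γ :=
        integral_mono (memLp_two_mul_mulVec_gaussianPi B i).integrable_sq
          (integrable_sq_mul_mulVec_bound B i) (sq_mul_mulVec_le B i)
    _ = 3 * (∑ j, |B i j|) ^ 2 := by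
        rw [integral_const_mul, integral_finsetSum _ fun j _ =>
          (integrable_pow_four_add_gaussianPi i j).const_mul _]
        simp only [integral_const_mul, integral_pow_four_add_gaussianPi, ← sum_mul]
        ring

lemma integral_sum_sq_sampleMean_mul_mulVec_sub_le {κ : Type*} [Fintype κ] [Nonempty κ]
    (B : Matrix ι ι ℝ) :
    ∫ x, ∑ i, (sampleMean (fun y => y i * (B *ᵥ y) i) x - B i i) ^ 2 ∂(Measure.pi fun _ : κ => γ)
      ≤ ∑ i, 3 * (∑ j, |B i j|) ^ 2 / Fintype.card κ := by
  rw [integral_finsetSum _ fun i _ =>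
    integrable_sq_sampleMean_sub (memLp_two_mul_mulVec_gaussianPi B i) _]
  gcongr with i
  rw [← integral_mul_mulVec_gaussianPi B i,
    integral_sq_sampleMean_sub (memLp_two_mul_mulVec_gaussianPi B i)]
  gcongr
  exact variance_mul_mulVec_gaussianPi_le B i

end GaussianPi

lemma one_le_exp_one_mul_log {x : ℝ} (hx : 2 ≤ x) : 1 ≤ rexp 1 * log x := by
  have he : 2 ≤ rexp 1 := by linarith [add_one_le_exp 1]
  have hlog : log 2 ≤ log x := log_le_log two_pos hx
  nlinarith [log_two_gt_d9]

theorem stmt_9_general (n m : ℕ) (hn : 2 ≤ n) (B : Matrix (Fin n) (Fin n) ℝ)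
    (hm1 : 8 * Real.exp 1 * Real.log n ≤ (m : ℝ))
    (P : Measure (Fin m → Fin n → ℝ))
    (hP : P = Measure.pi fun _ : Fin m => Measure.pi fun _ : Fin n => gaussianReal 0 1) :
    (∫ x, ∑ i, ((1 / (m : ℝ)) * (∑ k, x k i * B.mulVec (x k) i) - B i i) ^ 2 ∂P)
      ≤ 64 * n * (Real.exp 1 * Real.log n) ^ 3 / m * (⨆ i, ∑ j, |B i j|) ^ 2 := by
  subst hP
  have hlog : 1 ≤ rexp 1 * log n := one_le_exp_one_mul_log (by exact_mod_cast hn)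
  have hm : 0 < m := by exact_mod_cast (by nlinarith : (0 : ℝ) < m)
  have : Nonempty (Fin m) := ⟨⟨0, hm⟩⟩
  set C := ⨆ i, ∑ j, |B i j|
  calc _ = ∫ x, ∑ i, (sampleMean (fun y => y i * (B *ᵥ y) i) x - B i i) ^ 2
          ∂Measure.pi fun _ : Fin m => Measure.pi fun _ : Fin n => gaussianReal 0 1 := by
        simp [sampleMean]
    _ ≤ ∑ i, 3 * (∑ j, |B i j|) ^ 2 / m := by
        simpa using integral_sum_sq_sampleMean_mul_mulVec_sub_le (κ := Fin m) B
    _ ≤ ∑ _i : Fin n, 3 * C ^ 2 / m := by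
        gcongr with i
        exact le_ciSup (f := fun i => ∑ j, |B i j|) (Set.finite_range _).bddAbove i
    _ = n / m * C ^ 2 * 3 := by simp; ring
    _ ≤ n / m * C ^ 2 * (64 * (rexp 1 * log n) ^ 3) := by
        gcongr
        nlinarith [one_le_pow₀ (n := 3) hlog]
    _ = 64 * n * (rexp 1 * log n) ^ 3 / m * C ^ 2 := by ring

/-- Lemma 2.3, expectation form: for `n ≥ 2` and
`8 e log n ≤ m ≤ n`, the generalized stochastic diagonal estimator
`EST^m := (1/m) Σ_k ω^{(k)} ⊙ (B ω^{(k)})` satisfies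
`E‖EST^m − diag B‖₂² ≤ (64 n (e log n)³ / m) ‖B‖_∞²`, where
`‖B‖_∞ := max_i ‖[B]_{i,:}‖₁`. -/
theorem stmt_9 (n m : ℕ) (hn : 2 ≤ n) (B : Matrix (Fin n) (Fin n) ℝ)
    (hm1 : 8 * Real.exp 1 * Real.log n ≤ (m : ℝ)) (hm2 : m ≤ n)
    (P : Measure (Fin m → Fin n → ℝ))
    (hP : P = Measure.pi fun _ : Fin m => Measure.pi fun _ : Fin n => gaussianReal 0 1) :
    (∫ x, ∑ i, ((1 / (m : ℝ)) * (∑ k, x k i * B.mulVec (x k) i) - B i i) ^ 2 ∂P)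
      ≤ 64 * n * (Real.exp 1 * Real.log n) ^ 3 / m * (⨆ i, ∑ j, |B i j|) ^ 2 :=
  stmt_9_general n m hn B hm1 P hP
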